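/- arXiv:2508.06690 — 5 statements merged into one kernel-verified Lean document; each statement's English description precedes it below -/
import Mathlib

section
/- Let n ≥ 1 and let A, B : ℝ → Matrix (Fin n) (Fin n) ℝ be such that B is continuous, A is differentiable, and A'(t) = B(t) * A(t) for all t ∈ ℝ. Then t ↦ det(A(t)) is differentiable with d/dt det(A(t)) = trace(B(t)) · det(A(t)) for all t, and consequently det(A(t)) = det(A(0)) · exp(∫₀ᵗ trace(B(s)) ds) for all t. -/
/-!
Differentiating the Leibniz expansion of the determinant gives Jacobi's formula
`(det A)' = tr (adj A * A')`. With `A' = B A`, cyclicity of the trace and `A * adj A = det A • 1`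
turn this into `(det A)' = tr B * det A`, a scalar linear ODE, which the integrating factor
`exp (-∫₀ᵗ tr B)` solves.
-/

open Matrix Finset

namespace Matrix

variable {ι R : Type*} [Fintype ι] [DecidableEq ι] [CommRing R]

theorem det_updateCol_col_eq_adjugate_mul_apply (M N : Matrix ι ι R) (i : ι) :
    (M.updateCol i fun r => N r i).det = (M.adjugate * N) i i := by
  rw [← cramer_apply, cramer_eq_adjugate_mulVec, mul_apply, mulVec, dotProduct]

theorem trace_adjugate_mul_mul_self (M N : Matrix ι ι R) :
    (M.adjugate * (N * M)).trace = N.trace * M.det := by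
  rw [trace_mul_comm, Matrix.mul_assoc, mul_adjugate, Matrix.mul_smul, Matrix.mul_one,
    trace_smul, smul_eq_mul, mul_comm]

end Matrix

section Jacobi

variable {𝕜 ι : Type*} [NontriviallyNormedField 𝕜] [Fintype ι] [DecidableEq ι]

theorem hasDerivAt_det {A : 𝕜 → Matrix ι ι 𝕜} {A' : Matrix ι ι 𝕜} {t : 𝕜}
    (hA : ∀ i j, HasDerivAt (fun s => A s i j) (A' i j) t) :
    HasDerivAt (fun s => (A s).det) ((A t).adjugate * A').trace t := by
  have hperm : ∀ σ : Equiv.Perm ι, HasDerivAt (fun s => ∏ i, A s (σ i) i)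
      (∑ i, (∏ j ∈ univ.erase i, A t (σ j) j) • A' (σ i) i) t := fun σ =>
    HasDerivAt.fun_finsetProd fun i _ => hA (σ i) i
  have hdet := HasDerivAt.fun_sum (u := univ) fun σ _ =>
    (hperm σ).const_mul ((Equiv.Perm.sign σ : ℤ) : 𝕜)
  simp only [det_apply']
  refine hdet.congr_deriv (Eq.symm ?_)
  -- The `i`-th product-rule term is the expansion of `det A` with column `i` replaced by that of `A'`.
  simp_rw [trace, diag_apply, ← det_updateCol_col_eq_adjugate_mul_apply, det_apply', mul_sum]
  rw [sum_comm]
  refine sum_congr rfl fun σ _ => sum_congr rfl fun i _ => ?_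
  rw [← mul_prod_erase univ _ (mem_univ i), updateCol_self, smul_eq_mul, mul_comm (A' _ _)]
  congr 2
  exact prod_congr rfl fun j hj => updateCol_ne (ne_of_mem_erase hj)

end Jacobi

theorem eq_mul_exp_integral_of_hasDerivAt {f g : ℝ → ℝ} (hg : Continuous g)
    (hf : ∀ t, HasDerivAt f (g t * f t) t) (t : ℝ) :
    f t = f 0 * Real.exp (∫ s in (0:ℝ)..t, g s) := by
  set G : ℝ → ℝ := fun t => ∫ s in (0:ℝ)..t, g s
  have hG : ∀ t, HasDerivAt G (g t) t := fun t => hg.integral_hasStrictDerivAt 0 t |>.hasDerivAt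
  have hconst : ∀ t, HasDerivAt (fun s => f s * Real.exp (-G s)) 0 t := fun t =>
    ((hf t).mul (hG t).fun_neg.exp).congr_deriv (by ring)
  have h := is_const_of_deriv_eq_zero (fun s => (hconst s).differentiableAt)
    (fun s => (hconst s).deriv) t 0
  simp only [G, intervalIntegral.integral_same, neg_zero, Real.exp_zero, mul_one,
    Real.exp_neg] at h
  rw [← h, inv_mul_cancel_right₀ (Real.exp_ne_zero _)]

theorem det_of_matrix_linear_ode_general
    (n : ℕ)
    (A B : ℝ → Matrix (Fin n) (Fin n) ℝ)
    (hB : Continuous B)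
    (hA : ∀ (t : ℝ) (i j : Fin n), HasDerivAt (fun s => A s i j) ((B t * A t) i j) t) :
    (∀ t : ℝ, HasDerivAt (fun s => (A s).det) ((B t).trace * (A t).det) t) ∧
      ∀ t : ℝ, (A t).det = (A 0).det * Real.exp (∫ s in (0:ℝ)..t, (B s).trace) := by
  have hdet : ∀ t, HasDerivAt (fun s => (A s).det) ((B t).trace * (A t).det) t := fun t =>
    trace_adjugate_mul_mul_self (A t) (B t) ▸ hasDerivAt_det (hA t)
  exact ⟨hdet, eq_mul_exp_integral_of_hasDerivAt hB.matrix_trace hdet⟩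

/-- Liouville/Jacobi formula for linear matrix ODEs: if `B` is continuous and
`A` is differentiable (entrywise) with `A'(t) = B(t) * A(t)`, then `t ↦ det(A(t))` is
differentiable with derivative `trace(B(t)) * det(A(t))`, and
`det(A(t)) = det(A(0)) * exp(∫₀ᵗ trace(B(s)) ds)`. -/
theorem det_of_matrix_linear_ode
    (n : ℕ) (hn : 1 ≤ n)
    (A B : ℝ → Matrix (Fin n) (Fin n) ℝ)
    (hB : Continuous B)
    (hA : ∀ (t : ℝ) (i j : Fin n), HasDerivAt (fun s => A s i j) ((B t * A t) i j) t) :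
    (∀ t : ℝ, HasDerivAt (fun s => (A s).det) ((B t).trace * (A t).det) t) ∧
      ∀ t : ℝ, (A t).det = (A 0).det * Real.exp (∫ s in (0:ℝ)..t, (B s).trace) :=
  det_of_matrix_linear_ode_general n A B hB hA
end

section
/- Let d ≥ 1, let v : ℝ × ℝ^d → ℝ^d be jointly C², let φ be a flow of v that is jointly C² with each φ(t,·) a bijection of ℝ^d whose spatial derivative is invertible everywhere, and let ψ : ℝ × ℝ^d → ℝ^d be jointly C² with ψ(t, φ(t,y)) = y and φ(t, ψ(t,x)) = x for all (t,x,y). Let ρ₀ : ℝ^d → ℝ be C¹ and define ρ(t,x) := ρ₀(ψ(t,x)) · det(Dψ(t,x)). Then ρ(0,·) = ρ₀ and ρ solves the continuity equation: ∂_t ρ(t,x) + div(ρ(t,·) v(t,·))(x) = 0 for all (t,x), where div(w)(x) is the trace of the derivative of the vector field w at x. -/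
/-!
Along a trajectory `s ↦ φ(s,y)` the Jacobian `J(s) = det Dφ(s,y)` obeys Liouville's formula
`J' = J · div v`: this is Jacobi's formula for the derivative of a determinant combined with
`∂ₜ Dφ = Dv(φ) ∘ Dφ`, which comes from the symmetry of second derivatives. Since `ψ(s,·)` inverts
`φ(s,·)`, the product `ρ(s, φ(s,y)) · J(s) = ρ₀(y)` does not depend on `s`; differentiating it and
dividing by `J ≠ 0` gives `∂ₜρ + Dρ·v + ρ div v = 0`, and `div(ρv) = Dρ·v + ρ div v`.
-/

open ContinuousLinearMap

open Polynomial in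
theorem Matrix.hasDerivAt_det_one_add_smul {𝕜 ι : Type*} [NontriviallyNormedField 𝕜]
    [Fintype ι] [DecidableEq ι] (M : Matrix ι ι 𝕜) :
    HasDerivAt (fun r : 𝕜 => (1 + r • M).det) M.trace 0 := by
  let q := (det (1 + (X : 𝕜[X]) • M.map C)).divX.divX
  have hq : HasDerivAt (fun r => 1 + M.trace * r + q.eval r * r ^ 2) M.trace 0 :=
    ((((hasDerivAt_id' 0).const_mul M.trace).const_add 1).fun_add
      ((q.hasDerivAt 0).fun_mul (hasDerivAt_pow 2 0))).congr_deriv (by simp)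
  exact hq.congr_of_eventuallyEq (.of_forall fun r => Matrix.det_one_add_smul r M)

section Det

variable {𝕜 E : Type*} [NontriviallyNormedField 𝕜]
  [NormedAddCommGroup E] [NormedSpace 𝕜 E] [FiniteDimensional 𝕜 E]

theorem ContinuousLinearMap.hasDerivAt_det_one_add_smul (N : E →L[𝕜] E) :
    HasDerivAt (fun r : 𝕜 => (1 + r • N).det) (LinearMap.trace 𝕜 E N) 0 := by
  let b := Module.finBasis 𝕜 E
  have h := (LinearMap.toMatrix b b (N : E →ₗ[𝕜] E)).hasDerivAt_det_one_add_smul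
  rw [← LinearMap.trace_eq_matrix_trace] at h
  convert h using 2 with r
  rw [det, ← LinearMap.det_toMatrix b]
  simp

theorem ContinuousLinearMap.contDiff_det [CompleteSpace 𝕜] {n : WithTop ℕ∞} :
    ContDiff 𝕜 n fun f : E →L[𝕜] E => f.det := by
  let b := Module.finBasis 𝕜 E
  let entry (i j) : (E →L[𝕜] E) →L[𝕜] 𝕜 := LinearMap.toContinuousLinearMap
    ((Matrix.entryLinearMap 𝕜 𝕜 i j).comp
      ((LinearMap.toMatrix b b).toLinearMap.comp (coeLM 𝕜)))
  have hdet : (fun f : E →L[𝕜] E => f.det) =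
      fun f => ∑ σ : Equiv.Perm _, (Equiv.Perm.sign σ : 𝕜) * ∏ i, entry (σ i) i f := by
    ext f
    rw [det, ← LinearMap.det_toMatrix b, Matrix.det_apply]
    simp [entry, Units.smul_def]
  rw [hdet]
  exact ContDiff.sum fun σ _ => contDiff_const.mul
    (contDiff_prod fun i _ => (entry (σ i) i).contDiff)

theorem HasDerivAt.det [CompleteSpace 𝕜] {A : 𝕜 → E →L[𝕜] E} {A' B : E →L[𝕜] E} {t : 𝕜}
    (hA : HasDerivAt A A' t) (hBA : B ∘L A t = 1) :
    HasDerivAt (fun s => (A s).det) ((A t).det * LinearMap.trace 𝕜 E (A' ∘L B)) t := by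
  -- `det` is differentiable, and its derivative at `A t` in the direction `A'` is read off the
  -- line `A t + r • A' = (1 + r • A' B) A t`.
  have hdiff : DifferentiableAt 𝕜 (fun f : E →L[𝕜] E => f.det) (A t) :=
    (contDiff_det (n := 1)).differentiable one_ne_zero _
  have hline_chain : HasDerivAt (fun r : 𝕜 => (A t + r • A').det)
      (fderiv 𝕜 (fun f : E →L[𝕜] E => f.det) (A t) A') 0 := by
    have hcurve : HasDerivAt (fun r : 𝕜 => A t + r • A') A' 0 := by
      simpa using ((hasDerivAt_id (0 : 𝕜)).smul_const A').const_add (A t)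
    exact hdiff.hasFDerivAt.comp_hasDerivAt_of_eq 0 hcurve (by simp)
  have hfactor (r : 𝕜) : (A t + r • A').det = (1 + r • (A' ∘L B)).det * (A t).det := by
    rw [← LinearMap.det_comp, ← toLinearMap_comp, add_comp, smul_comp, comp_assoc, hBA, one_def,
      comp_id, id_comp]
  have hline_factor : HasDerivAt (fun r : 𝕜 => (A t + r • A').det)
      ((A t).det * LinearMap.trace 𝕜 E (A' ∘L B)) 0 := by
    simp_rw [hfactor, mul_comm (A t).det]
    exact (A' ∘L B).hasDerivAt_det_one_add_smul.mul_const _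
  have hcomp := hdiff.hasFDerivAt.comp_hasDerivAt t hA
  rwa [hline_chain.unique hline_factor] at hcomp

theorem trace_fderiv_smul {a : E → 𝕜} {u : E → E} {x : E} (ha : DifferentiableAt 𝕜 a x)
    (hu : DifferentiableAt 𝕜 u x) :
    LinearMap.trace 𝕜 E (fderiv 𝕜 (fun y => a y • u y) x) =
      fderiv 𝕜 a x (u x) + a x * LinearMap.trace 𝕜 E (fderiv 𝕜 u x) := by
  rw [fderiv_fun_smul ha hu, toLinearMap_add, toLinearMap_smul, map_add, map_smul, smul_eq_mul,
    add_comm]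
  congr 1
  exact LinearMap.trace_smulRight _ _

end Det

section SpatialFDeriv

variable {F G : Type*} [NormedAddCommGroup F] [NormedSpace ℝ F]
  [NormedAddCommGroup G] [NormedSpace ℝ G]

noncomputable def spatialFDeriv (f : ℝ × F → G) (p : ℝ × F) : F →L[ℝ] G :=
  fderiv ℝ f p ∘L inr ℝ ℝ F

variable {f : ℝ × F → G} {t : ℝ} {x : F}

theorem DifferentiableAt.hasDerivAt_fst_slice (hf : DifferentiableAt ℝ f (t, x)) :
    HasDerivAt (fun s => f (s, x)) (fderiv ℝ f (t, x) (1, 0)) t :=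
  hf.hasFDerivAt.comp_hasDerivAt t ((hasDerivAt_id t).prodMk (hasDerivAt_const t x))

theorem DifferentiableAt.hasFDerivAt_snd_slice (hf : DifferentiableAt ℝ f (t, x)) :
    HasFDerivAt (fun y => f (t, y)) (spatialFDeriv f (t, x)) x :=
  hf.hasFDerivAt.comp x (hasFDerivAt_prodMk_right t x)

theorem DifferentiableAt.fderiv_apply_one_eq (hf : DifferentiableAt ℝ f (t, x)) (w : F) :
    fderiv ℝ f (t, x) (1, w) = deriv (fun s => f (s, x)) t + spatialFDeriv f (t, x) w := by
  rw [hf.hasDerivAt_fst_slice.deriv, spatialFDeriv, comp_apply, inr_apply, ← map_add,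
    Prod.mk_add_mk, add_zero, zero_add]

theorem ContDiff.spatialFDeriv {n : WithTop ℕ∞} (hf : ContDiff ℝ (n + 1) f) :
    ContDiff ℝ n (spatialFDeriv f) :=
  (hf.fderiv_right le_rfl).clm_comp contDiff_const

theorem hasDerivAt_spatialFDeriv_of_hasDerivAt_fst_slice (hf : ContDiff ℝ 2 f) {g : F → G}
    {g' : F →L[ℝ] G} (hg : ∀ z, HasDerivAt (fun s => f (s, z)) (g z) t) (hg' : HasFDerivAt g g' x) :
    HasDerivAt (fun s => spatialFDeriv f (s, x)) g' t := by
  have hf' : Differentiable ℝ (fderiv ℝ f) :=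
    (hf.fderiv_right (m := 1) le_rfl).differentiable one_ne_zero
  have hD := (hf' (t, x)).hasDerivAt_fst_slice.clm_comp (hasDerivAt_const t (inr ℝ ℝ F))
  refine hD.congr_deriv ?_
  ext w
  have hsymm := (hf.contDiffAt (x := (t, x))).isSymmSndFDerivAt (by simp) ((0 : ℝ), w) (1, 0)
  have hslice : HasFDerivAt (fun z => fderiv ℝ f (t, z) (1, 0))
      (apply ℝ G ((1 : ℝ), (0 : F)) ∘L spatialFDeriv (fderiv ℝ f) (t, x)) x :=
    (apply ℝ G ((1 : ℝ), (0 : F))).hasFDerivAt.comp x (hf' (t, x)).hasFDerivAt_snd_slice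
  have hg_eq : (fun z => fderiv ℝ f (t, z) (1, 0)) = g :=
    funext fun z => ((hf.differentiable two_ne_zero _).hasDerivAt_fst_slice).unique (hg z)
  rw [hg_eq] at hslice
  rw [← hslice.unique hg']
  simpa [spatialFDeriv] using hsymm.symm

theorem spatialFDeriv_comp_eq_id {g : ℝ × F → F} {h : ℝ × F → F}
    (hg : DifferentiableAt ℝ g (t, h (t, x))) (hh : DifferentiableAt ℝ h (t, x))
    (hgh : ∀ y, g (t, h (t, y)) = y) :
    spatialFDeriv g (t, h (t, x)) ∘L spatialFDeriv h (t, x) = .id ℝ F := by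
  have hcomp := hg.hasFDerivAt_snd_slice.comp x hh.hasFDerivAt_snd_slice
  rw [show ((fun y => g (t, y)) ∘ fun y => h (t, y)) = id from funext hgh] at hcomp
  exact hcomp.unique (hasFDerivAt_id x)

theorem hasDerivAt_det_spatialFDeriv [FiniteDimensional ℝ F] {φ v : ℝ × F → F}
    (hφ : ContDiff ℝ 2 φ) (hv : DifferentiableAt ℝ v (t, φ (t, x)))
    (hflow : ∀ z, HasDerivAt (fun s => φ (s, z)) (v (t, φ (t, z))) t)
    (hdet : (spatialFDeriv φ (t, x)).det ≠ 0) :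
    HasDerivAt (fun s => (spatialFDeriv φ (s, x)).det)
      ((spatialFDeriv φ (t, x)).det * LinearMap.trace ℝ F (spatialFDeriv v (t, φ (t, x)))) t := by
  have hφx := (hφ.differentiable two_ne_zero (t, x)).hasFDerivAt_snd_slice
  have hvφ := hv.hasFDerivAt_snd_slice.comp x hφx
  have hA := hasDerivAt_spatialFDeriv_of_hasDerivAt_fst_slice hφ hflow hvφ
  let L := (spatialFDeriv φ (t, x)).toContinuousLinearEquivOfDetNeZero hdet
  have hleft : (L.symm : F →L[ℝ] F) ∘L spatialFDeriv φ (t, x) = 1 := by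
    ext y; exact L.symm_apply_apply y
  have hright : spatialFDeriv φ (t, x) ∘L (L.symm : F →L[ℝ] F) = 1 := by
    ext y; exact L.apply_symm_apply y
  refine (hA.det hleft).congr_deriv ?_
  rw [comp_assoc, hright, one_def, comp_id]

theorem continuity_equation_of_mul_const_along {ρ : ℝ × F → ℝ} {γ : ℝ → F} {J : ℝ → ℝ}
    {c δ : ℝ} {w : F} (hρ : DifferentiableAt ℝ ρ (t, γ t)) (hγ : HasDerivAt γ w t)
    (hJ : HasDerivAt J (J t * δ) t) (hJt : J t ≠ 0) (hc : ∀ s, ρ (s, γ s) * J s = c) :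
    deriv (fun s => ρ (s, γ t)) t + spatialFDeriv ρ (t, γ t) w + ρ (t, γ t) * δ = 0 := by
  have hργ : HasDerivAt (fun s => ρ (s, γ s)) (fderiv ℝ ρ (t, γ t) (1, w)) t :=
    hρ.hasFDerivAt.comp_hasDerivAt t ((hasDerivAt_id t).prodMk hγ)
  have hzero := (hργ.mul hJ).unique ((hasDerivAt_const t c).congr_of_eventuallyEq (.of_forall hc))
  rw [hρ.fderiv_apply_one_eq] at hzero
  refine (mul_eq_zero.mp ?_).resolve_right hJt
  linear_combination hzero

end SpatialFDeriv

theorem continuity_equation_for_pushforward_density_general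
    (d : ℕ)
    (v : ℝ × EuclideanSpace ℝ (Fin d) → EuclideanSpace ℝ (Fin d))
    (hv : ContDiff ℝ 2 v)
    (φ : ℝ × EuclideanSpace ℝ (Fin d) → EuclideanSpace ℝ (Fin d))
    (hφ0 : ∀ x, φ (0, x) = x)
    (hφflow : ∀ t x, HasDerivAt (fun s => φ (s, x)) (v (t, φ (t, x))) t)
    (hφC2 : ContDiff ℝ 2 φ)
    (ψ : ℝ × EuclideanSpace ℝ (Fin d) → EuclideanSpace ℝ (Fin d))
    (hψC2 : ContDiff ℝ 2 ψ)
    (hψφ : ∀ t y, ψ (t, φ (t, y)) = y)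
    (hφψ : ∀ t x, φ (t, ψ (t, x)) = x)
    (ρ₀ : EuclideanSpace ℝ (Fin d) → ℝ)
    (hρ₀ : ContDiff ℝ 1 ρ₀)
    (ρ : ℝ × EuclideanSpace ℝ (Fin d) → ℝ)
    (hρ : ∀ (t : ℝ) (x : EuclideanSpace ℝ (Fin d)),
      ρ (t, x) = ρ₀ (ψ (t, x)) * (fderiv ℝ (fun y => ψ (t, y)) x).det) :
    (∀ x, ρ (0, x) = ρ₀ x) ∧
      ∀ (t : ℝ) (x : EuclideanSpace ℝ (Fin d)),
        deriv (fun s => ρ (s, x)) t +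
          LinearMap.trace ℝ (EuclideanSpace ℝ (Fin d))
            (fderiv ℝ (fun y => ρ (t, y) • v (t, y)) x :
              EuclideanSpace ℝ (Fin d) →ₗ[ℝ] EuclideanSpace ℝ (Fin d)) = 0 := by
  have hφ : Differentiable ℝ φ := hφC2.differentiable two_ne_zero
  have hψ : Differentiable ℝ ψ := hψC2.differentiable two_ne_zero
  have hρ_eq : ρ = fun p => ρ₀ (ψ p) * (spatialFDeriv ψ p).det := by
    ext ⟨t, x⟩
    rw [hρ, (hψ _).hasFDerivAt_snd_slice.fderiv]
  have hρdiff : Differentiable ℝ ρ := by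
    rw [hρ_eq]
    exact ((hρ₀.comp (hψC2.of_le one_le_two)).mul
      (contDiff_det.comp hψC2.spatialFDeriv)).differentiable one_ne_zero
  refine ⟨fun x => ?_, fun t x => ?_⟩
  · have hψ0 : (fun y => ψ (0, y)) = id := funext fun y => by simpa [hφ0] using hφψ 0 y
    rw [hρ, hψ0, fderiv_id, det, coe_id, LinearMap.det_id, mul_one, congrFun hψ0 x, id]
  obtain ⟨y, rfl⟩ : ∃ y, φ (t, y) = x := ⟨ψ (t, x), hφψ t x⟩
  have hdet (s : ℝ) : (spatialFDeriv ψ (s, φ (s, y))).det * (spatialFDeriv φ (s, y)).det = 1 := by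
    rw [← LinearMap.det_comp, ← toLinearMap_comp,
      spatialFDeriv_comp_eq_id (hψ _) (hφ _) (hψφ s)]
    simp
  have hconst (s : ℝ) : ρ (s, φ (s, y)) * (spatialFDeriv φ (s, y)).det = ρ₀ y := by
    rw [hρ_eq, mul_assoc, hdet, hψφ, mul_one]
  have hJt := right_ne_zero_of_mul_eq_one (hdet t)
  have hJ := hasDerivAt_det_spatialFDeriv hφC2 (hv.differentiable two_ne_zero _) (hφflow t) hJt
  have key := continuity_equation_of_mul_const_along (γ := fun s => φ (s, y)) (hρdiff _)
    (hφflow t y) hJ hJt hconst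
  have hρx := (hρdiff (t, φ (t, y))).hasFDerivAt_snd_slice
  have hvx := (hv.differentiable two_ne_zero (t, φ (t, y))).hasFDerivAt_snd_slice
  rw [trace_fderiv_smul hρx.differentiableAt hvx.differentiableAt, hρx.fderiv, hvx.fderiv]
  linear_combination key

/-- continuity equation: with `φ` a jointly `C²` flow of a jointly `C²`
time-dependent vector field `v` on `ℝ^d`, each `φ(t,·)` bijective with everywhere invertible
spatial derivative, `ψ` the (jointly `C²`) inverse, and `ρ₀ ∈ C¹`, the density
`ρ(t,x) = ρ₀(ψ(t,x)) · det(Dψ(t,x))` satisfies `ρ(0,·) = ρ₀` and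
`∂ₜρ(t,x) + div(ρ(t,·) v(t,·))(x) = 0`. -/
theorem continuity_equation_for_pushforward_density
    (d : ℕ) (hd : 1 ≤ d)
    (v : ℝ × EuclideanSpace ℝ (Fin d) → EuclideanSpace ℝ (Fin d))
    (hv : ContDiff ℝ 2 v)
    (φ : ℝ × EuclideanSpace ℝ (Fin d) → EuclideanSpace ℝ (Fin d))
    (hφ0 : ∀ x, φ (0, x) = x)
    (hφflow : ∀ t x, HasDerivAt (fun s => φ (s, x)) (v (t, φ (t, x))) t)
    (hφC2 : ContDiff ℝ 2 φ)
    (hφbij : ∀ t : ℝ, Function.Bijective (fun x => φ (t, x)))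
    (hφinv : ∀ (t : ℝ) (x : EuclideanSpace ℝ (Fin d)),
      ∃ L : EuclideanSpace ℝ (Fin d) ≃L[ℝ] EuclideanSpace ℝ (Fin d),
        (L : EuclideanSpace ℝ (Fin d) →L[ℝ] EuclideanSpace ℝ (Fin d)) =
          fderiv ℝ (fun y => φ (t, y)) x)
    (ψ : ℝ × EuclideanSpace ℝ (Fin d) → EuclideanSpace ℝ (Fin d))
    (hψC2 : ContDiff ℝ 2 ψ)
    (hψφ : ∀ t y, ψ (t, φ (t, y)) = y)
    (hφψ : ∀ t x, φ (t, ψ (t, x)) = x)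
    (ρ₀ : EuclideanSpace ℝ (Fin d) → ℝ)
    (hρ₀ : ContDiff ℝ 1 ρ₀)
    (ρ : ℝ × EuclideanSpace ℝ (Fin d) → ℝ)
    (hρ : ∀ (t : ℝ) (x : EuclideanSpace ℝ (Fin d)),
      ρ (t, x) = ρ₀ (ψ (t, x)) * (fderiv ℝ (fun y => ψ (t, y)) x).det) :
    (∀ x, ρ (0, x) = ρ₀ x) ∧
      ∀ (t : ℝ) (x : EuclideanSpace ℝ (Fin d)),
        deriv (fun s => ρ (s, x)) t +
          LinearMap.trace ℝ (EuclideanSpace ℝ (Fin d))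
            (fderiv ℝ (fun y => ρ (t, y) • v (t, y)) x :
              EuclideanSpace ℝ (Fin d) →ₗ[ℝ] EuclideanSpace ℝ (Fin d)) = 0 :=
  continuity_equation_for_pushforward_density_general d v hv φ hφ0 hφflow hφC2 ψ hψC2 hψφ hφψ ρ₀ hρ₀
    ρ hρ
end

section
/- Let d ≥ 1, let v : ℝ^d → ℝ^d be C¹ and 2π-periodic in each coordinate (v(x + 2π m) = v(x) for all x ∈ ℝ^d and m ∈ ℤ^d), and let Φ := id + v. Assume det(DΦ(x)) > 0 for all x and that Φ : ℝ^d → ℝ^d is a bijection. Then for every continuous f : ℝ^d → ℝ that is 2π-periodic in each coordinate, ∫_{[0,2π]^d} f(Φ(x)) · det(DΦ(x)) dx = ∫_{[0,2π]^d} f(x) dx. -/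
open scoped Real

open MeasureTheory Set

/-!
The translates of the cube by `2π ℤ^d` tile `ℝ^d`, and since `Φ` commutes with these translations
and is a bijection mapping null sets to null sets, the image of a fundamental domain under `Φ` is
again a fundamental domain.
Integrals of a periodic function over any two fundamental domains agree, so the usual change of
variables formula on the image of the cube gives the claim.
-/

section ChangeOfVariables

variable {E F : Type*} [NormedAddCommGroup E] [NormedSpace ℝ E] [FiniteDimensional ℝ E]

theorem ContDiff.isOpenMap_of_det_fderiv_ne_zero {Φ : E → E} (hΦ : ContDiff ℝ 1 Φ)
    (hdet : ∀ x, (fderiv ℝ Φ x).det ≠ 0) : IsOpenMap Φ :=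
  isOpenMap_of_hasStrictFDerivAt_equiv
    (f' := fun x => (fderiv ℝ Φ x).toContinuousLinearEquivOfDetNeZero (hdet x)) fun x => by
      rw [ContinuousLinearMap.coe_toContinuousLinearEquivOfDetNeZero]
      exact hΦ.hasStrictFDerivAt one_ne_zero

variable [MeasurableSpace E] [BorelSpace E] (μ : Measure E) [μ.IsAddHaarMeasure]
  [NormedAddCommGroup F] [NormedSpace ℝ F]

theorem Homeomorph.quasiMeasurePreserving_symm_of_differentiable (Φ : E ≃ₜ E)
    (hΦ : Differentiable ℝ Φ) : Measure.QuasiMeasurePreserving Φ.symm μ μ := by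
  refine ⟨Φ.symm.continuous.measurable, Measure.AbsolutelyContinuous.mk fun s hs hμs => ?_⟩
  rw [Measure.map_apply Φ.symm.continuous.measurable hs, ← Φ.image_eq_preimage_symm]
  exact addHaar_image_eq_zero_of_differentiableOn_of_addHaar_eq_zero μ hΦ.differentiableOn hμs

theorem MeasureTheory.IsAddFundamentalDomain.setIntegral_abs_det_fderiv_smul_comp
    {L : AddSubgroup E} [Countable L] {s : Set E} (hs : IsAddFundamentalDomain L s μ)
    (hsm : MeasurableSet s) (Φ : E ≃ₜ E) (hΦ : Differentiable ℝ Φ)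
    (hΦL : ∀ g ∈ L, ∀ x, Φ (g + x) = g + Φ x) {f : E → F}
    (hf : ∀ g ∈ L, ∀ x, f (g + x) = f x) :
    ∫ x in s, |(fderiv ℝ Φ x).det| • f (Φ x) ∂μ = ∫ x in s, f x ∂μ := by
  have hΦs : IsAddFundamentalDomain L (Φ '' s) μ :=
    hs.image_of_equiv Φ.toEquiv (Φ.quasiMeasurePreserving_symm_of_differentiable μ hΦ)
      (Equiv.refl L) fun g x => hΦL g g.2 x
  rw [← integral_image_eq_integral_abs_det_fderiv_smul μ hsm
    (fun x _ => (hΦ x).hasFDerivAt.hasFDerivWithinAt) Φ.injective.injOn]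
  exact hΦs.setIntegral_eq hs fun g x => hf g g.2 x

end ChangeOfVariables

section PeriodLattice

variable {ι : Type*} [Fintype ι] {T : ℝ}

variable (ι) in
noncomputable def Pi.scaledBasisFun (hT : T ≠ 0) : Module.Basis ι ℝ (ι → ℝ) :=
  (Pi.basisFun ℝ ι).isUnitSMul fun _ => hT.isUnit

theorem Pi.scaledBasisFun_repr (hT : T ≠ 0) (x : ι → ℝ) (i : ι) :
    (Pi.scaledBasisFun ι hT).repr x i = x i / T := by
  simp [Pi.scaledBasisFun, Module.Basis.repr_isUnitSMul, Units.smul_def, div_eq_inv_mul]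

theorem Pi.mem_span_scaledBasisFun (hT : T ≠ 0) {y : ι → ℝ} :
    y ∈ Submodule.span ℤ (range (Pi.scaledBasisFun ι hT)) ↔
      ∃ m : ι → ℤ, y = fun i => T * m i := by
  simp only [Module.Basis.mem_span_iff_repr_mem, Pi.scaledBasisFun_repr, mem_range, funext_iff,
    eq_div_iff hT, algebraMap_int_eq, eq_intCast, eq_comm (a := y _), mul_comm T]
  exact Classical.skolem

theorem Pi.fundamentalDomain_scaledBasisFun (hT : 0 < T) :
    ZSpan.fundamentalDomain (Pi.scaledBasisFun ι hT.ne') = univ.pi fun _ => Ico 0 T := by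
  ext x
  simp only [ZSpan.fundamentalDomain, mem_ofPred_eq, mem_pi, mem_univ, true_implies, mem_Ico,
    Pi.scaledBasisFun_repr, le_div_iff₀ hT, div_lt_one hT, zero_mul]

end PeriodLattice

theorem periodic_change_of_variables_general
    (d : ℕ)
    (v : (Fin d → ℝ) → (Fin d → ℝ))
    (hv : ContDiff ℝ 1 v)
    (hvper : ∀ (x : Fin d → ℝ) (m : Fin d → ℤ),
      v (x + fun i => 2 * π * (m i : ℝ)) = v x)
    (Φ : (Fin d → ℝ) → (Fin d → ℝ))
    (hΦ : ∀ x, Φ x = x + v x)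
    (hdet : ∀ x, 0 < (fderiv ℝ Φ x).det)
    (hΦbij : Function.Bijective Φ)
    (f : (Fin d → ℝ) → ℝ)
    (hfper : ∀ (x : Fin d → ℝ) (m : Fin d → ℤ),
      f (x + fun i => 2 * π * (m i : ℝ)) = f x) :
    ∫ x in Set.Icc (0 : Fin d → ℝ) (fun _ => 2 * π), f (Φ x) * (fderiv ℝ Φ x).det =
      ∫ x in Set.Icc (0 : Fin d → ℝ) (fun _ => 2 * π), f x := by
  have hΦC1 : ContDiff ℝ 1 Φ := funext hΦ ▸ contDiff_id.add hv
  let Ψ : (Fin d → ℝ) ≃ₜ (Fin d → ℝ) := (Equiv.ofBijective Φ hΦbij).toHomeomorphOfContinuousOpen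
    hΦC1.continuous (hΦC1.isOpenMap_of_det_fderiv_ne_zero fun x => (hdet x).ne')
  have hΨ : ⇑Ψ = Φ := rfl
  let b := Pi.scaledBasisFun (Fin d) Real.two_pi_pos.ne'
  let L := (Submodule.span ℤ (range b)).toAddSubgroup
  have : Countable L := inferInstanceAs (Countable (Submodule.span ℤ (range b)))
  have hΦL : ∀ g ∈ L, ∀ x, Ψ (g + x) = g + Ψ x := by
    rintro g hg x
    obtain ⟨m, rfl⟩ := (Pi.mem_span_scaledBasisFun _).1 hg
    rw [hΨ, hΦ, hΦ, add_comm _ x, hvper]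
    abel
  have hfL : ∀ g ∈ L, ∀ x, f (g + x) = f x := by
    rintro g hg x
    obtain ⟨m, rfl⟩ := (Pi.mem_span_scaledBasisFun _).1 hg
    rw [add_comm, hfper]
  have hcube : ZSpan.fundamentalDomain b =ᵐ[volume] Icc (0 : Fin d → ℝ) (fun _ => 2 * π) := by
    rw [Pi.fundamentalDomain_scaledBasisFun Real.two_pi_pos, volume_pi]
    exact Measure.univ_pi_Ico_ae_eq_Icc
  have hcov := (ZSpan.isAddFundamentalDomain' b volume).setIntegral_abs_det_fderiv_smul_comp volume
    (ZSpan.fundamentalDomain_measurableSet b) Ψ (hΦC1.differentiable one_ne_zero) hΦL hfL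
  rw [hΨ] at hcov
  rw [← setIntegral_congr_set hcube, ← setIntegral_congr_set hcube, ← hcov]
  refine setIntegral_congr_fun (ZSpan.fundamentalDomain_measurableSet b) fun x _ => ?_
  rw [abs_of_pos (hdet x), smul_eq_mul, mul_comm]

/-- periodic change of variables: if `v : ℝ^d → ℝ^d` is `C¹` and `2π`-periodic
in each coordinate, `Φ = id + v` is a bijection of `ℝ^d` with `det DΦ > 0` everywhere, then
for every continuous `2π`-periodic `f : ℝ^d → ℝ`,
`∫_{[0,2π]^d} f(Φ(x)) det(DΦ(x)) dx = ∫_{[0,2π]^d} f(x) dx`. -/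
theorem periodic_change_of_variables
    (d : ℕ) (hd : 1 ≤ d)
    (v : (Fin d → ℝ) → (Fin d → ℝ))
    (hv : ContDiff ℝ 1 v)
    (hvper : ∀ (x : Fin d → ℝ) (m : Fin d → ℤ),
      v (x + fun i => 2 * π * (m i : ℝ)) = v x)
    (Φ : (Fin d → ℝ) → (Fin d → ℝ))
    (hΦ : ∀ x, Φ x = x + v x)
    (hdet : ∀ x, 0 < (fderiv ℝ Φ x).det)
    (hΦbij : Function.Bijective Φ)
    (f : (Fin d → ℝ) → ℝ)
    (hf : Continuous f)
    (hfper : ∀ (x : Fin d → ℝ) (m : Fin d → ℤ),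
      f (x + fun i => 2 * π * (m i : ℝ)) = f x) :
    ∫ x in Set.Icc (0 : Fin d → ℝ) (fun _ => 2 * π), f (Φ x) * (fderiv ℝ Φ x).det =
      ∫ x in Set.Icc (0 : Fin d → ℝ) (fun _ => 2 * π), f x :=
  periodic_change_of_variables_general d v hv hvper Φ hΦ hdet hΦbij f hfper
end

section
/- Let d ≥ 1, let v : ℝ × ℝ^d → ℝ^d be continuous, let φ be a flow of v that is jointly C¹, and let ψ : ℝ × ℝ^d → ℝ^d be jointly C¹ with ψ(t, φ(t,y)) = y and φ(t, ψ(t,x)) = x for all (t,x,y). Let u₀ : ℝ^d → ℝ be C¹. Then u(t,x) := u₀(ψ(t,x)) satisfies u(0,·) = u₀ and the transport equation ∂_t u(t,x) + ⟨v(t,x), ∇_x u(t,x)⟩ = 0 for all (t,x). -/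
/-! A `C¹` function that is constant along the graph curves `s ↦ (s, φ (s, y))` of the flow has
zero derivative in their direction `(1, v)`; splitting that directional derivative into its time
and space parts is the transport equation. The pullback `u₀ ∘ ψ` is such a function, since
`ψ (s, φ (s, y)) = y`. -/

open InnerProductSpace

section Partial

variable {E F : Type*} [NormedAddCommGroup E] [NormedSpace ℝ E]
  [NormedAddCommGroup F] [NormedSpace ℝ F]

theorem HasFDerivAt.hasDerivAt_comp_prodMk_const {U : ℝ × E → F} {D : ℝ × E →L[ℝ] F}
    {t : ℝ} {x : E} (hU : HasFDerivAt U D (t, x)) :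
    HasDerivAt (fun s => U (s, x)) (D (1, 0)) t :=
  hU.comp_hasDerivAt t ((hasDerivAt_id t).prodMk (hasDerivAt_const t x))

theorem HasFDerivAt.apply_eq_zero_of_const_along_graph {U : ℝ × E → F} {D : ℝ × E →L[ℝ] F}
    {γ : ℝ → E} {t : ℝ} {w : E} {c : F} (hU : HasFDerivAt U D (t, γ t))
    (hγ : HasDerivAt γ w t) (hconst : ∀ s, U (s, γ s) = c) :
    D (1, w) = 0 := by
  have hchain : HasDerivAt (fun s => U (s, γ s)) (D (1, w)) t :=
    hU.comp_hasDerivAt t ((hasDerivAt_id t).prodMk hγ)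
  rw [funext hconst] at hchain
  exact hchain.unique (hasDerivAt_const t c)

end Partial

section Gradient

variable {E : Type*} [NormedAddCommGroup E] [InnerProductSpace ℝ E] [CompleteSpace E]

theorem HasFDerivAt.inner_gradient_comp_prodMk_const {U : ℝ × E → ℝ} {D : ℝ × E →L[ℝ] ℝ}
    {t : ℝ} {x : E} (hU : HasFDerivAt U D (t, x)) (w : E) :
    ⟪gradient (fun y => U (t, y)) x, w⟫_ℝ = D (0, w) := by
  have hspace : HasFDerivAt (fun y => U (t, y)) (D.comp (ContinuousLinearMap.inr ℝ ℝ E)) x :=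
    hU.comp x (hasFDerivAt_prodMk_right t x)
  rw [gradient, hspace.fderiv, toDual_symm_apply]
  rfl

theorem deriv_add_inner_gradient_eq_zero_of_const_along_graph {U : ℝ × E → ℝ} {γ : ℝ → E}
    {t : ℝ} {w : E} {c : ℝ} (hU : DifferentiableAt ℝ U (t, γ t)) (hγ : HasDerivAt γ w t)
    (hconst : ∀ s, U (s, γ s) = c) :
    deriv (fun s => U (s, γ t)) t + ⟪w, gradient (fun y => U (t, y)) (γ t)⟫_ℝ = 0 := by
  have hD := hU.hasFDerivAt
  rw [hD.hasDerivAt_comp_prodMk_const.deriv, real_inner_comm,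
    hD.inner_gradient_comp_prodMk_const, ← map_add, Prod.mk_add_mk, add_zero, zero_add]
  exact hD.apply_eq_zero_of_const_along_graph hγ hconst

end Gradient

theorem pullback_solves_transport_equation_general
    (d : ℕ)
    (v : ℝ × EuclideanSpace ℝ (Fin d) → EuclideanSpace ℝ (Fin d))
    (φ : ℝ × EuclideanSpace ℝ (Fin d) → EuclideanSpace ℝ (Fin d))
    (hφ0 : ∀ x, φ (0, x) = x)
    (hφflow : ∀ t x, HasDerivAt (fun s => φ (s, x)) (v (t, φ (t, x))) t)
    (ψ : ℝ × EuclideanSpace ℝ (Fin d) → EuclideanSpace ℝ (Fin d))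
    (hψC1 : ContDiff ℝ 1 ψ)
    (hψφ : ∀ t y, ψ (t, φ (t, y)) = y)
    (hφψ : ∀ t x, φ (t, ψ (t, x)) = x)
    (u₀ : EuclideanSpace ℝ (Fin d) → ℝ)
    (hu₀ : ContDiff ℝ 1 u₀)
    (u : ℝ × EuclideanSpace ℝ (Fin d) → ℝ)
    (hu : ∀ (t : ℝ) (x : EuclideanSpace ℝ (Fin d)), u (t, x) = u₀ (ψ (t, x))) :
    (∀ x, u (0, x) = u₀ x) ∧
      ∀ (t : ℝ) (x : EuclideanSpace ℝ (Fin d)),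
        deriv (fun s => u (s, x)) t +
          (inner ℝ (v (t, x)) (gradient (fun y => u (t, y)) x) : ℝ) = 0 := by
  obtain rfl : u = fun p => u₀ (ψ p) := funext fun p => hu p.1 p.2
  refine ⟨fun x => by simpa only [hφ0] using congrArg u₀ (hψφ 0 x), fun t x => ?_⟩
  have hflow : HasDerivAt (fun s => φ (s, ψ (t, x))) (v (t, x)) t := by
    simpa only [hφψ] using hφflow t (ψ (t, x))
  have htransport := deriv_add_inner_gradient_eq_zero_of_const_along_graph
    ((hu₀.comp hψC1).differentiable one_ne_zero _) hflow (fun s => congrArg u₀ (hψφ s _))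
  simpa only [hφψ, Function.comp_apply] using htransport

/-- pullback along the inverse flow solves the transport equation: with `φ` a
jointly `C¹` flow of a continuous time-dependent vector field `v` on `ℝ^d`, `ψ` its jointly
`C¹` two-sided inverse, and `u₀ ∈ C¹`, the function `u(t,x) = u₀(ψ(t,x))` satisfies
`u(0,·) = u₀` and `∂ₜu(t,x) + ⟨v(t,x), ∇ₓu(t,x)⟩ = 0`. -/
theorem pullback_solves_transport_equation
    (d : ℕ) (hd : 1 ≤ d)
    (v : ℝ × EuclideanSpace ℝ (Fin d) → EuclideanSpace ℝ (Fin d))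
    (hv : Continuous v)
    (φ : ℝ × EuclideanSpace ℝ (Fin d) → EuclideanSpace ℝ (Fin d))
    (hφ0 : ∀ x, φ (0, x) = x)
    (hφflow : ∀ t x, HasDerivAt (fun s => φ (s, x)) (v (t, φ (t, x))) t)
    (hφC1 : ContDiff ℝ 1 φ)
    (ψ : ℝ × EuclideanSpace ℝ (Fin d) → EuclideanSpace ℝ (Fin d))
    (hψC1 : ContDiff ℝ 1 ψ)
    (hψφ : ∀ t y, ψ (t, φ (t, y)) = y)
    (hφψ : ∀ t x, φ (t, ψ (t, x)) = x)
    (u₀ : EuclideanSpace ℝ (Fin d) → ℝ)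
    (hu₀ : ContDiff ℝ 1 u₀)
    (u : ℝ × EuclideanSpace ℝ (Fin d) → ℝ)
    (hu : ∀ (t : ℝ) (x : EuclideanSpace ℝ (Fin d)), u (t, x) = u₀ (ψ (t, x))) :
    (∀ x, u (0, x) = u₀ x) ∧
      ∀ (t : ℝ) (x : EuclideanSpace ℝ (Fin d)),
        deriv (fun s => u (s, x)) t +
          (inner ℝ (v (t, x)) (gradient (fun y => u (t, y)) x) : ℝ) = 0 :=
  pullback_solves_transport_equation_general d v φ hφ0 hφflow ψ hψC1 hψφ hφψ u₀ hu₀ u hu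
end

section
/- Let d ≥ 1, let v : ℝ × ℝ^d → ℝ^d be continuous, let φ be a flow of v that is jointly C¹, and let ψ : ℝ × ℝ^d → ℝ^d be jointly C¹ with ψ(t, φ(t,y)) = y and φ(t, ψ(t,x)) = x for all (t,x,y). Let φ₀ : ℝ^d → ℝ be C¹ and f : ℝ × ℝ^d → ℝ be jointly C¹. Define u(t,x) := φ₀(ψ(t,x)) + ∫₀ᵗ f(s, φ(s, ψ(t,x))) ds. Then u(0,·) = φ₀ and u solves the forced transport equation: ∂_t u(t,x) + ⟨v(t,x), ∇_x u(t,x)⟩ = f(t,x) for all (t,x). -/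
/-!
Along a characteristic `s ↦ φ (s, y)` the formula collapses to
`u (s, φ (s, y)) = φ₀ y + ∫ r in 0..s, f (r, φ (r, y))`, whose derivative is `f` by the
fundamental theorem of calculus, while the chain rule computes the same derivative as
`∂ₜu + ⟪v, ∇ₓu⟫`. The chain rule needs `u` jointly differentiable; for the parametric primitive
`(t, y) ↦ ∫ s in 0..t, g (s, y)` this follows from the continuity of both partial derivatives,
the spatial one being obtained by differentiating under the integral sign.
-/

open MeasureTheory Filter Topology ContinuousLinearMap

section ParametricIntegral

variable {E F : Type*} [NormedAddCommGroup E] [NormedSpace ℝ E]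
  [NormedAddCommGroup F] [NormedSpace ℝ F]

theorem hasFDerivAt_parametric_intervalIntegral_of_contDiff {g : ℝ × E → F} (hg : ContDiff ℝ 1 g)
    (a b : ℝ) (y : E) :
    HasFDerivAt (fun z => ∫ s in a..b, g (s, z))
      (∫ s in a..b, fderiv ℝ g (s, y) ∘L inr ℝ ℝ E) y := by
  set D : ℝ × E → E →L[ℝ] F := fun p => fderiv ℝ g p ∘L inr ℝ ℝ E
  have hD : Continuous D := (hg.continuous_fderiv one_ne_zero).clm_comp continuous_const
  have hDs : ∀ z, Continuous fun s => D (s, z) := fun z => hD.comp (by fun_prop)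
  have hgs : ∀ z, Continuous fun s => g (s, z) := fun z => hg.continuous.comp (by fun_prop)
  -- tube lemma over the compact `[a, b]`: a domination valid uniformly near `y`
  have hnear : ∀ᶠ z in 𝓝 y, ∀ s ∈ Set.uIcc a b, ‖D (s, z) - D (s, y)‖ < 1 := by
    refine isCompact_uIcc.eventually_forall_of_forall_eventually fun s _ => ?_
    have : ContinuousAt (fun q : E × ℝ => ‖D (q.2, q.1) - D (q.2, y)‖) (y, s) := by
      unfold D; fun_prop
    exact this.eventually (gt_mem_nhds (by simp))
  refine intervalIntegral.hasFDerivAt_integral_of_dominated_of_fderiv_le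
    (F' := fun z s => D (s, z)) (bound := fun s => ‖D (s, y)‖ + 1) hnear
    (Eventually.of_forall fun z => (hgs z).aestronglyMeasurable)
    ((hgs y).intervalIntegrable _ _) (hDs y).aestronglyMeasurable ?_
    (((hDs y).norm.add continuous_const).intervalIntegrable _ _) ?_
  · refine Eventually.of_forall fun s hs z hz => ?_
    calc ‖D (s, z)‖ ≤ ‖D (s, y)‖ + ‖D (s, z) - D (s, y)‖ := norm_le_insert' _ _
      _ ≤ ‖D (s, y)‖ + 1 := by gcongr; exact (hz s (Set.uIoc_subset_uIcc hs)).le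
  · refine Eventually.of_forall fun s _ z _ => ?_
    exact ((hg.differentiable one_ne_zero (s, z)).hasFDerivAt).comp z
      (hasFDerivAt_prodMk_right s z)

theorem hasStrictFDerivAt_parametric_primitive_of_contDiff [CompleteSpace F] {g : ℝ × E → F}
    (hg : ContDiff ℝ 1 g) (a : ℝ) (p : ℝ × E) :
    HasStrictFDerivAt (fun q : ℝ × E => ∫ s in a..q.1, g (s, q.2))
      ((toSpanSingleton ℝ (g p)).coprod (∫ s in a..p.1, fderiv ℝ g (s, p.2) ∘L inr ℝ ℝ E)) p := by
  have hD : Continuous fun p : ℝ × E => fderiv ℝ g p ∘L inr ℝ ℝ E :=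
    (hg.continuous_fderiv one_ne_zero).clm_comp continuous_const
  refine hasStrictFDerivAt_uncurry_coprod (f := fun t z => ∫ s in a..t, g (s, z))
    (f₁ := fun t z => toSpanSingleton ℝ (g (t, z)))
    (f₂ := fun t z => ∫ s in a..t, fderiv ℝ g (s, z) ∘L inr ℝ ℝ E) ?_ ?_ ?_ ?_
  · refine Eventually.of_forall fun q => ?_
    have hgq : Continuous fun s => g (s, q.2) := hg.continuous.comp (by fun_prop)
    exact (hgq.integral_hasStrictDerivAt a q.1).hasDerivAt.hasFDerivAt
  · exact Eventually.of_forall fun q =>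
      hasFDerivAt_parametric_intervalIntegral_of_contDiff hg a q.1 q.2
  · exact ((toSpanSingletonCLE (𝕜 := ℝ) (E := F)).continuous.comp hg.continuous).continuousAt
  · exact (intervalIntegral.continuous_parametric_intervalIntegral_of_continuous
      (μ := volume) (f := fun q s => fderiv ℝ g (s, q.2) ∘L inr ℝ ℝ E) (hD.comp (by fun_prop))
      continuous_fst).continuousAt

end ParametricIntegral

section Transport

variable {E : Type*} [NormedAddCommGroup E] [InnerProductSpace ℝ E] [CompleteSpace E]

theorem deriv_add_inner_gradient_eq_of_hasDerivAt_along {u : ℝ × E → ℝ} {t : ℝ} {x w : E}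
    (hu : DifferentiableAt ℝ u (t, x)) {c : ℝ → E} (hc : HasDerivAt c w t) (hct : c t = x)
    {a : ℝ} (ha : HasDerivAt (fun s => u (s, c s)) a t) :
    deriv (fun s => u (s, x)) t + inner ℝ w (gradient (fun y => u (t, y)) x) = a := by
  set L := fderiv ℝ u (t, x)
  have hL : HasFDerivAt u L (t, x) := hu.hasFDerivAt
  have htime : deriv (fun s => u (s, x)) t = L (1, 0) :=
    (hL.comp_hasDerivAt t ((hasDerivAt_id t).prodMk (hasDerivAt_const t x))).deriv
  have hspace : inner ℝ w (gradient (fun y => u (t, y)) x) = L (0, w) := by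
    have hslice : HasFDerivAt (fun y => u (t, y)) (L ∘L inr ℝ ℝ E) x :=
      hL.comp x (hasFDerivAt_prodMk_right t x)
    rw [hslice.hasGradientAt.gradient, real_inner_comm, InnerProductSpace.toDual_symm_apply]
    rfl
  have hcurve : HasDerivAt (fun s => u (s, c s)) (L (1, w)) t := by
    rw [← hct] at hL
    exact hL.comp_hasDerivAt t ((hasDerivAt_id t).prodMk hc)
  rw [htime, hspace, ← map_add, ha.unique hcurve]
  norm_num

end Transport

theorem duhamel_forced_transport_general
    (d : ℕ)
    (v : ℝ × EuclideanSpace ℝ (Fin d) → EuclideanSpace ℝ (Fin d))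
    (φ : ℝ × EuclideanSpace ℝ (Fin d) → EuclideanSpace ℝ (Fin d))
    (hφ0 : ∀ x, φ (0, x) = x)
    (hφflow : ∀ t x, HasDerivAt (fun s => φ (s, x)) (v (t, φ (t, x))) t)
    (hφC1 : ContDiff ℝ 1 φ)
    (ψ : ℝ × EuclideanSpace ℝ (Fin d) → EuclideanSpace ℝ (Fin d))
    (hψC1 : ContDiff ℝ 1 ψ)
    (hψφ : ∀ t y, ψ (t, φ (t, y)) = y)
    (hφψ : ∀ t x, φ (t, ψ (t, x)) = x)
    (φ₀ : EuclideanSpace ℝ (Fin d) → ℝ)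
    (hφ₀ : ContDiff ℝ 1 φ₀)
    (f : ℝ × EuclideanSpace ℝ (Fin d) → ℝ)
    (hf : ContDiff ℝ 1 f)
    (u : ℝ × EuclideanSpace ℝ (Fin d) → ℝ)
    (hu : ∀ (t : ℝ) (x : EuclideanSpace ℝ (Fin d)),
      u (t, x) = φ₀ (ψ (t, x)) + ∫ s in (0:ℝ)..t, f (s, φ (s, ψ (t, x)))) :
    (∀ x, u (0, x) = φ₀ x) ∧
      ∀ (t : ℝ) (x : EuclideanSpace ℝ (Fin d)),
        deriv (fun s => u (s, x)) t +
          (inner ℝ (v (t, x)) (gradient (fun y => u (t, y)) x) : ℝ) = f (t, x) := by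
  set g : ℝ × EuclideanSpace ℝ (Fin d) → ℝ := fun p => f (p.1, φ p)
  have hg : ContDiff ℝ 1 g := hf.comp (contDiff_fst.prodMk hφC1)
  refine ⟨fun x => ?_, fun t x => ?_⟩
  · have hψ0 : ψ (0, x) = x := by simpa [hφ0] using hφψ 0 x
    simp [hu, hψ0]
  obtain ⟨y, rfl⟩ : ∃ y, x = φ (t, y) := ⟨ψ (t, x), (hφψ t x).symm⟩
  have hdiff : Differentiable ℝ u := by
    have hprim (p : ℝ × EuclideanSpace ℝ (Fin d)) :=
      (hasStrictFDerivAt_parametric_primitive_of_contDiff hg 0 p).differentiableAt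
    rw [show u = fun p => φ₀ (ψ p) + ∫ s in (0:ℝ)..p.1, g (s, ψ p) from
      funext fun p => hu p.1 p.2]
    exact ((hφ₀.comp hψC1).differentiable one_ne_zero).add fun p =>
      (hprim _).comp p (differentiableAt_fst.prodMk (hψC1.differentiable one_ne_zero p))
  have hchar : (fun s => u (s, φ (s, y))) = fun s => φ₀ y + ∫ r in (0:ℝ)..s, g (r, y) := by
    funext s
    rw [hu, hψφ]
  have hslope : HasDerivAt (fun s => u (s, φ (s, y))) (g (t, y)) t := by
    have hgy : Continuous fun r => g (r, y) := hg.continuous.comp (by fun_prop)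
    rw [hchar]
    exact ((hgy.integral_hasStrictDerivAt 0 t).hasDerivAt).const_add _
  exact deriv_add_inner_gradient_eq_of_hasDerivAt_along (hdiff _) (hφflow t y) rfl hslope

/-- Duhamel's principle for the forced transport equation: with `φ` a jointly
`C¹` flow of a continuous time-dependent vector field `v` on `ℝ^d`, `ψ` its jointly `C¹`
two-sided inverse, `φ₀ ∈ C¹`, and `f` jointly `C¹`, the function
`u(t,x) = φ₀(ψ(t,x)) + ∫₀ᵗ f(s, φ(s, ψ(t,x))) ds` satisfies `u(0,·) = φ₀` and
`∂ₜu(t,x) + ⟨v(t,x), ∇ₓu(t,x)⟩ = f(t,x)`. -/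
theorem duhamel_forced_transport
    (d : ℕ) (hd : 1 ≤ d)
    (v : ℝ × EuclideanSpace ℝ (Fin d) → EuclideanSpace ℝ (Fin d))
    (hv : Continuous v)
    (φ : ℝ × EuclideanSpace ℝ (Fin d) → EuclideanSpace ℝ (Fin d))
    (hφ0 : ∀ x, φ (0, x) = x)
    (hφflow : ∀ t x, HasDerivAt (fun s => φ (s, x)) (v (t, φ (t, x))) t)
    (hφC1 : ContDiff ℝ 1 φ)
    (ψ : ℝ × EuclideanSpace ℝ (Fin d) → EuclideanSpace ℝ (Fin d))
    (hψC1 : ContDiff ℝ 1 ψ)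
    (hψφ : ∀ t y, ψ (t, φ (t, y)) = y)
    (hφψ : ∀ t x, φ (t, ψ (t, x)) = x)
    (φ₀ : EuclideanSpace ℝ (Fin d) → ℝ)
    (hφ₀ : ContDiff ℝ 1 φ₀)
    (f : ℝ × EuclideanSpace ℝ (Fin d) → ℝ)
    (hf : ContDiff ℝ 1 f)
    (u : ℝ × EuclideanSpace ℝ (Fin d) → ℝ)
    (hu : ∀ (t : ℝ) (x : EuclideanSpace ℝ (Fin d)),
      u (t, x) = φ₀ (ψ (t, x)) + ∫ s in (0:ℝ)..t, f (s, φ (s, ψ (t, x)))) :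
    (∀ x, u (0, x) = φ₀ x) ∧
      ∀ (t : ℝ) (x : EuclideanSpace ℝ (Fin d)),
        deriv (fun s => u (s, x)) t +
          (inner ℝ (v (t, x)) (gradient (fun y => u (t, y)) x) : ℝ) = f (t, x) :=
  duhamel_forced_transport_general d v φ hφ0 hφflow hφC1 ψ hψC1 hψφ hφψ φ₀ hφ₀ f hf u hu
end
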